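/- There is no holomorphic function ψ on the unit disk such that the multiplication operator M_ψ f = ψ f is an isometry from H^∞(𝔻) (with sup norm) into the Bloch space 𝓑(𝔻) (with norm |g(0)| + sup_z (1-|z|²)|g'(z)|). -/

import Mathlib

open Metric Filter

/-- The open unit disk in ℂ. -/
noncomputable def unitDisk : Set ℂ := Metric.ball 0 1

/-- Supremum norm over the unit disk. -/
noncomputable def supNorm (f : ℂ → ℂ) : ℝ :=
  sSup ((fun z => ‖f z‖) '' unitDisk)

/-- Bloch seminorm over the unit disk. -/
noncomputable def blochSemi (g : ℂ → ℂ) : ℝ :=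
  sSup ((fun z => (1 - ‖z‖ ^ 2) * ‖deriv g z‖) '' unitDisk)

/-- Bloch norm over the unit disk. -/
noncomputable def blochNorm (g : ℂ → ℂ) : ℝ :=
  ‖g 0‖ + blochSemi g

/-!
Test the isometry on disk automorphisms `φ_a` (`φ_a(0) = a`, `φ_a(a) = 0`, sup norm `1`,
`(1 - |a|²)|φ_a'(a)| = 1`). The constant `1` gives `|ψ(0)| + β_ψ = 1`, and `φ_a` gives
`|ψ(a)| ≤ β_{ψφ_a} = 1 - |ψ(0)||a|`. Since `φ_{1/2} + φ_{-1/2}` vanishes at `0` but has sup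
norm `2`, subadditivity of `β` forces `ψ(0) = 0`; hence `|ψ| ≤ 1` and `β_ψ = 1`.
By Schwarz–Pick `β_ψ ≤ ‖ψ‖_∞`, so `‖ψ‖_∞ = 1`, while testing on `ψ` itself gives
`‖ψ‖_∞ = β_{ψ²}`, and Schwarz–Pick bounds `(1 - |z|²)|2ψψ'| ≤ 2|ψ|(1 - |ψ|²) < 4/5`.
-/

open ComplexConjugate Set Topology

lemma mem_unitDisk {z : ℂ} : z ∈ unitDisk ↔ ‖z‖ < 1 := mem_ball_zero_iff

lemma isOpen_unitDisk : IsOpen unitDisk := isOpen_ball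

lemma zero_mem_unitDisk : (0 : ℂ) ∈ unitDisk := mem_unitDisk.2 (by simp)

lemma one_sub_norm_sq_pos {z : ℂ} (hz : z ∈ unitDisk) : 0 < 1 - ‖z‖ ^ 2 := by
  have := mem_unitDisk.1 hz
  nlinarith [norm_nonneg z]

lemma DifferentiableOn.differentiableAt_of_mem_unitDisk {f : ℂ → ℂ}
    (hf : DifferentiableOn ℂ f unitDisk) {z : ℂ} (hz : z ∈ unitDisk) : DifferentiableAt ℂ f z :=
  hf.differentiableAt (isOpen_unitDisk.mem_nhds hz)

lemma supNorm_le {f : ℂ → ℂ} {r : ℝ} (hf : ∀ z ∈ unitDisk, ‖f z‖ ≤ r) : supNorm f ≤ r :=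
  csSup_le ⟨_, mem_image_of_mem _ zero_mem_unitDisk⟩ (forall_mem_image.2 hf)

lemma norm_le_supNorm {f : ℂ → ℂ} (hf : BddAbove ((fun z => ‖f z‖) '' unitDisk)) {z : ℂ}
    (hz : z ∈ unitDisk) : ‖f z‖ ≤ supNorm f :=
  le_csSup hf (mem_image_of_mem _ hz)

lemma norm_apply_one_le_supNorm {f : ℂ → ℂ} (hf : BddAbove ((fun z => ‖f z‖) '' unitDisk))
    (hc : ContinuousAt f 1) : ‖f 1‖ ≤ supNorm f := by
  have hlim : Tendsto (fun t : ℝ => ‖f t‖) (𝓝[<] 1) (𝓝 ‖f 1‖) := by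
    have := (hc.comp_of_eq Complex.continuous_ofReal.continuousAt Complex.ofReal_one).norm
    simpa using this.tendsto.mono_left nhdsWithin_le_nhds
  refine le_of_tendsto hlim (eventually_of_mem (Ioo_mem_nhdsLT (by norm_num : (-1 : ℝ) < 1)) ?_)
  intro t ht
  refine norm_le_supNorm hf (mem_unitDisk.2 ?_)
  rw [Complex.norm_real, Real.norm_eq_abs, abs_lt]
  exact ht

section Mobius

/-- The disk automorphism exchanging `0` and `a`. -/
noncomputable def mobius (a z : ℂ) : ℂ := (a - z) / (1 - conj a * z)

variable {a z : ℂ}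

lemma one_sub_conj_mul_ne_zero (h : ‖a‖ * ‖z‖ < 1) : 1 - conj a * z ≠ 0 := by
  intro h0
  have : ‖conj a * z‖ = 1 := by rw [← sub_eq_zero.1 h0, norm_one]
  rw [norm_mul, Complex.norm_conj] at this
  linarith

lemma normSq_one_sub_conj_mul (a z : ℂ) :
    Complex.normSq (1 - conj a * z) =
      Complex.normSq (a - z) + (1 - Complex.normSq a) * (1 - Complex.normSq z) := by
  apply Complex.ofReal_injective
  push_cast
  simp only [← Complex.mul_conj, map_sub, map_mul, map_one, Complex.conj_conj]
  ring

lemma norm_mobius_lt_one (ha : ‖a‖ < 1) (hz : ‖z‖ < 1) : ‖mobius a z‖ < 1 := by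
  have hden : 0 < ‖1 - conj a * z‖ :=
    norm_pos_iff.2 (one_sub_conj_mul_ne_zero (by nlinarith [norm_nonneg a, norm_nonneg z]))
  rw [mobius, norm_div, div_lt_one hden,
    ← pow_lt_pow_iff_left₀ (norm_nonneg _) (norm_nonneg _) two_ne_zero, Complex.sq_norm,
    Complex.sq_norm, normSq_one_sub_conj_mul, Complex.normSq_eq_norm_sq a,
    Complex.normSq_eq_norm_sq z]
  have ha2 : ‖a‖ ^ 2 < 1 := by nlinarith [norm_nonneg a]
  have hz2 : ‖z‖ ^ 2 < 1 := by nlinarith [norm_nonneg z]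
  nlinarith

lemma norm_mobius_one (ha : ‖a‖ < 1) : ‖mobius a 1‖ = 1 := by
  have hden : 1 - conj a ≠ 0 := by simpa using one_sub_conj_mul_ne_zero (z := 1) (by simpa)
  rw [mobius, mul_one, norm_div, div_eq_one_iff_eq (norm_ne_zero_iff.2 hden), ← norm_neg,
    ← Complex.norm_conj (1 - conj a)]
  simp

lemma mobius_zero (a : ℂ) : mobius a 0 = a := by simp [mobius]

lemma mobius_self (a : ℂ) : mobius a a = 0 := by simp [mobius]

lemma mobius_ofReal_one {a : ℝ} (ha : a ≠ 1) : mobius a 1 = -1 := by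
  have : (1 : ℂ) - a ≠ 0 := sub_ne_zero.2 (by exact_mod_cast ha.symm)
  rw [mobius, Complex.conj_ofReal, mul_one, ← neg_sub, neg_div, div_self this]

lemma differentiableAt_mobius (h : ‖a‖ * ‖z‖ < 1) : DifferentiableAt ℂ (mobius a) z :=
  ((differentiableAt_const a).sub differentiableAt_id).div
    ((differentiableAt_const 1).sub (differentiableAt_id.const_mul _))
    (one_sub_conj_mul_ne_zero h)

lemma deriv_mobius (h : ‖a‖ * ‖z‖ < 1) :
    deriv (mobius a) z = ((‖a‖ : ℂ) ^ 2 - 1) / (1 - conj a * z) ^ 2 := by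
  have hd := ((hasDerivAt_id z).const_sub a).fun_div
    ((hasDerivAt_id z).const_mul (conj a) |>.const_sub 1) (one_sub_conj_mul_ne_zero h)
  rw [show mobius a = fun w => (a - id w) / (1 - conj a * id w) from rfl, hd.deriv,
    ← Complex.mul_conj']
  simp only [id]
  ring

lemma norm_deriv_mobius_zero (ha : ‖a‖ < 1) : ‖deriv (mobius a) 0‖ = 1 - ‖a‖ ^ 2 := by
  rw [deriv_mobius (by simp), mul_zero, sub_zero, one_pow, div_one, ← norm_neg, neg_sub,
    ← Complex.ofReal_pow, ← Complex.ofReal_one, ← Complex.ofReal_sub, Complex.norm_real,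
    Real.norm_of_nonneg (by nlinarith [norm_nonneg a])]

lemma norm_deriv_mobius_self (ha : ‖a‖ < 1) : ‖deriv (mobius a) a‖ = (1 - ‖a‖ ^ 2)⁻¹ := by
  have hpos : 0 < 1 - ‖a‖ ^ 2 := by nlinarith [norm_nonneg a]
  have hcast : 1 - (‖a‖ : ℂ) ^ 2 = ((1 - ‖a‖ ^ 2 : ℝ) : ℂ) := by push_cast; ring
  rw [deriv_mobius (by nlinarith [norm_nonneg a]), Complex.conj_mul',
    show (‖a‖ : ℂ) ^ 2 - 1 = -(1 - (‖a‖ : ℂ) ^ 2) by ring, hcast, neg_div, norm_neg, norm_div,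
    norm_pow, Complex.norm_real, Real.norm_of_nonneg hpos.le]
  field_simp

lemma differentiableOn_mobius (ha : ‖a‖ < 1) : DifferentiableOn ℂ (mobius a) unitDisk :=
  fun z hz => (differentiableAt_mobius
    (by nlinarith [norm_nonneg a, norm_nonneg z, mem_unitDisk.1 hz])).differentiableWithinAt

lemma mapsTo_mobius (ha : ‖a‖ < 1) : MapsTo (mobius a) unitDisk unitDisk :=
  fun _ hz => mem_unitDisk.2 (norm_mobius_lt_one ha (mem_unitDisk.1 hz))

lemma norm_mobius_le_one (ha : ‖a‖ < 1) (hz : z ∈ unitDisk) : ‖mobius a z‖ ≤ 1 :=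
  (norm_mobius_lt_one ha (mem_unitDisk.1 hz)).le

lemma bddAbove_norm_mobius (ha : ‖a‖ < 1) : BddAbove ((fun z => ‖mobius a z‖) '' unitDisk) :=
  ⟨1, forall_mem_image.2 fun _ => norm_mobius_le_one ha⟩

lemma continuousAt_mobius_one (ha : ‖a‖ < 1) : ContinuousAt (mobius a) 1 :=
  (differentiableAt_mobius (by simpa)).continuousAt

lemma supNorm_mobius (ha : ‖a‖ < 1) : supNorm (mobius a) = 1 := by
  refine le_antisymm (supNorm_le fun _ => norm_mobius_le_one ha) ?_
  rw [← norm_mobius_one ha]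
  exact norm_apply_one_le_supNorm (bddAbove_norm_mobius ha) (continuousAt_mobius_one ha)

end Mobius

theorem schwarz_pick {φ : ℂ → ℂ} (hφ : DifferentiableOn ℂ φ unitDisk)
    (hmaps : MapsTo φ unitDisk unitDisk) {a : ℂ} (ha : a ∈ unitDisk) :
    (1 - ‖a‖ ^ 2) * ‖deriv φ a‖ ≤ 1 - ‖φ a‖ ^ 2 := by
  have ha' := mem_unitDisk.1 ha
  have hw := mem_unitDisk.1 (hmaps ha)
  -- `G` fixes `0`, so Schwarz bounds `G' 0`, which the chain rule expresses through `φ' a`.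
  set G := mobius (φ a) ∘ φ ∘ mobius a
  have hGmaps : MapsTo G unitDisk unitDisk :=
    (mapsTo_mobius hw).comp (hmaps.comp (mapsTo_mobius ha'))
  have hGdiff : DifferentiableOn ℂ G unitDisk :=
    (differentiableOn_mobius hw).comp (hφ.comp (differentiableOn_mobius ha') (mapsTo_mobius ha'))
      (hmaps.comp (mapsTo_mobius ha'))
  have hG0 : G 0 = 0 := by simp [G, mobius_zero, mobius_self]
  have hschwarz : ‖deriv G 0‖ ≤ 1 :=
    Complex.norm_deriv_le_one_of_mapsTo_ball hGdiff
      (fun z hz => by rw [hG0]; exact ball_subset_closedBall (hGmaps hz)) one_pos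
  have hderiv : deriv G 0 = deriv (mobius (φ a)) (φ a) * (deriv φ a * deriv (mobius a) 0) := by
    have hmob : DifferentiableAt ℂ (mobius a) 0 := differentiableAt_mobius (by simp)
    have hφa : DifferentiableAt ℂ φ (mobius a 0) := by
      rw [mobius_zero]; exact hφ.differentiableAt_of_mem_unitDisk ha
    have hmobw : DifferentiableAt ℂ (mobius (φ a)) ((φ ∘ mobius a) 0) :=
      differentiableAt_mobius (by simp [mobius_zero]; nlinarith [norm_nonneg (φ a)])
    rw [deriv_comp 0 hmobw (hφa.comp 0 hmob), deriv_comp 0 hφa hmob]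
    simp [mobius_zero]
  rw [hderiv, norm_mul, norm_mul, norm_deriv_mobius_self hw, norm_deriv_mobius_zero ha',
    inv_mul_le_iff₀ (one_sub_norm_sq_pos (hmaps ha))] at hschwarz
  linarith

section Bloch

/-- Without this, `blochSemi g` is the junk value `0`. -/
def IsBloch (g : ℂ → ℂ) : Prop :=
  BddAbove ((fun z => (1 - ‖z‖ ^ 2) * ‖deriv g z‖) '' unitDisk)

variable {f g : ℂ → ℂ}

lemma blochSemi_nonneg (g : ℂ → ℂ) : 0 ≤ blochSemi g :=
  Real.sSup_nonneg (forall_mem_image.2 fun _ hz =>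
    mul_nonneg (one_sub_norm_sq_pos hz).le (norm_nonneg _))

lemma le_blochSemi (hg : IsBloch g) {z : ℂ} (hz : z ∈ unitDisk) :
    (1 - ‖z‖ ^ 2) * ‖deriv g z‖ ≤ blochSemi g :=
  le_csSup hg (mem_image_of_mem _ hz)

lemma blochSemi_le {r : ℝ} (h : ∀ z ∈ unitDisk, (1 - ‖z‖ ^ 2) * ‖deriv g z‖ ≤ r) :
    blochSemi g ≤ r :=
  csSup_le ⟨_, mem_image_of_mem _ zero_mem_unitDisk⟩ (forall_mem_image.2 h)

lemma isBloch_of_norm_lt_blochNorm (h : ‖g 0‖ < blochNorm g) : IsBloch g := by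
  by_contra hg
  rw [blochNorm, blochSemi, Real.sSup_of_not_bddAbove hg, add_zero] at h
  exact lt_irrefl _ h

lemma blochSemi_add_le (hfd : DifferentiableOn ℂ f unitDisk) (hgd : DifferentiableOn ℂ g unitDisk)
    (hf : IsBloch f) (hg : IsBloch g) :
    blochSemi (fun z => f z + g z) ≤ blochSemi f + blochSemi g := by
  refine blochSemi_le fun z hz => ?_
  rw [deriv_fun_add (hfd.differentiableAt_of_mem_unitDisk hz)
    (hgd.differentiableAt_of_mem_unitDisk hz)]
  calc (1 - ‖z‖ ^ 2) * ‖deriv f z + deriv g z‖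
      ≤ (1 - ‖z‖ ^ 2) * ‖deriv f z‖ + (1 - ‖z‖ ^ 2) * ‖deriv g z‖ := by
        rw [← mul_add]
        exact mul_le_mul_of_nonneg_left (norm_add_le _ _) (one_sub_norm_sq_pos hz).le
    _ ≤ blochSemi f + blochSemi g := add_le_add (le_blochSemi hf hz) (le_blochSemi hg hz)

end Bloch

section BoundedFunctions

variable {ψ : ℂ → ℂ} {A : ℝ}

lemma one_sub_sq_mul_norm_deriv_le (hψ : DifferentiableOn ℂ ψ unitDisk)
    (hA : ∀ z ∈ unitDisk, ‖ψ z‖ < A) {a : ℂ} (ha : a ∈ unitDisk) :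
    (1 - ‖a‖ ^ 2) * ‖deriv ψ a‖ ≤ A - ‖ψ a‖ ^ 2 / A := by
  have hA0 : 0 < A := (norm_nonneg _).trans_lt (hA 0 zero_mem_unitDisk)
  have hnorm (w : ℂ) : ‖w / A‖ = ‖w‖ / A := by
    rw [norm_div, Complex.norm_real, Real.norm_of_nonneg hA0.le]
  have h := schwarz_pick (φ := fun z => ψ z / A) (hψ.div_const _)
    (fun z hz => mem_unitDisk.2 ((hnorm (ψ z)).trans_lt ((div_lt_one hA0).2 (hA z hz)))) ha
  rw [deriv_div_const, hnorm, hnorm, div_pow, ← mul_div_assoc, div_le_iff₀ hA0] at h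
  refine h.trans_eq ?_
  field_simp

lemma blochSemi_le_of_norm_lt (hψ : DifferentiableOn ℂ ψ unitDisk)
    (hA : ∀ z ∈ unitDisk, ‖ψ z‖ < A) : blochSemi ψ ≤ A := by
  have hA0 : 0 < A := (norm_nonneg _).trans_lt (hA 0 zero_mem_unitDisk)
  refine blochSemi_le fun z hz => (one_sub_sq_mul_norm_deriv_le hψ hA hz).trans ?_
  have := div_nonneg (sq_nonneg ‖ψ z‖) hA0.le
  linarith

/-- `4/5` is a convenient bound for `max_{0 ≤ y ≤ A} 2y(A - y²/A) / A² = 4/(3√3) ≈ 0.77`. -/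
lemma blochSemi_mul_self_le_of_norm_lt (hψ : DifferentiableOn ℂ ψ unitDisk)
    (hA : ∀ z ∈ unitDisk, ‖ψ z‖ < A) : blochSemi (fun z => ψ z * ψ z) ≤ 4 / 5 * A ^ 2 := by
  have hA0 : 0 < A := (norm_nonneg _).trans_lt (hA 0 zero_mem_unitDisk)
  refine blochSemi_le fun z hz => ?_
  have hd := hψ.differentiableAt_of_mem_unitDisk hz
  have hsp := one_sub_sq_mul_norm_deriv_le hψ hA hz
  set y := ‖ψ z‖
  have hy : 0 ≤ y := norm_nonneg _
  calc (1 - ‖z‖ ^ 2) * ‖deriv (fun z => ψ z * ψ z) z‖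
      = 2 * y * ((1 - ‖z‖ ^ 2) * ‖deriv ψ z‖) := by
        rw [deriv_fun_mul hd hd, mul_comm (deriv ψ z), ← two_mul, norm_mul, norm_mul,
          Complex.norm_two]
        ring
    _ ≤ 2 * y * (A - y ^ 2 / A) := mul_le_mul_of_nonneg_left hsp (by positivity)
    _ ≤ 4 / 5 * A ^ 2 := by
      rw [show 2 * y * (A - y ^ 2 / A) = (2 * y * A ^ 2 - 2 * y ^ 3) / A by field_simp,
        div_le_iff₀ hA0]
      nlinarith [mul_nonneg (sq_nonneg (y - 29 / 50 * A)) (by positivity : 0 ≤ y + 29 / 25 * A),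
        mul_nonneg (mul_nonneg hA0.le hA0.le) hy, pow_pos hA0 3]

end BoundedFunctions

def IsIsometricMultiplier (ψ : ℂ → ℂ) : Prop :=
  ∀ f : ℂ → ℂ, DifferentiableOn ℂ f unitDisk → BddAbove ((fun z => ‖f z‖) '' unitDisk) →
    blochNorm (fun z => ψ z * f z) = supNorm f

namespace IsIsometricMultiplier

variable {ψ : ℂ → ℂ} {a : ℂ}

lemma norm_apply_zero_add_blochSemi (h : IsIsometricMultiplier ψ) :
    ‖ψ 0‖ + blochSemi ψ = 1 := by
  have hone : ∀ z ∈ unitDisk, ‖(fun _ : ℂ => (1 : ℂ)) z‖ ≤ 1 := by simp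
  have hbdd : BddAbove ((fun z => ‖(fun _ : ℂ => (1 : ℂ)) z‖) '' unitDisk) :=
    ⟨1, forall_mem_image.2 hone⟩
  have hsup : supNorm (fun _ : ℂ => (1 : ℂ)) = 1 :=
    le_antisymm (supNorm_le hone) (by simpa using norm_apply_one_le_supNorm hbdd continuousAt_const)
  simpa [blochNorm, hsup] using h _ (differentiableOn_const 1) hbdd

lemma norm_apply_zero_le_one (h : IsIsometricMultiplier ψ) : ‖ψ 0‖ ≤ 1 := by
  linarith [h.norm_apply_zero_add_blochSemi, blochSemi_nonneg ψ]

lemma blochNorm_mul_mobius (h : IsIsometricMultiplier ψ) (ha : ‖a‖ < 1) :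
    blochNorm (fun z => ψ z * mobius a z) = 1 := by
  rw [h _ (differentiableOn_mobius ha) (bddAbove_norm_mobius ha), supNorm_mobius ha]

lemma blochSemi_mul_mobius (h : IsIsometricMultiplier ψ) (ha : ‖a‖ < 1) :
    blochSemi (fun z => ψ z * mobius a z) = 1 - ‖ψ 0‖ * ‖a‖ := by
  have := h.blochNorm_mul_mobius ha
  rw [blochNorm, mobius_zero, norm_mul] at this
  linarith

lemma isBloch_mul_mobius (h : IsIsometricMultiplier ψ) (ha : ‖a‖ < 1) :
    IsBloch (fun z => ψ z * mobius a z) := by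
  refine isBloch_of_norm_lt_blochNorm ?_
  rw [h.blochNorm_mul_mobius ha, mobius_zero, norm_mul]
  nlinarith [h.norm_apply_zero_le_one, norm_nonneg a, norm_nonneg (ψ 0)]

/-- Testing on `mobius a`, which vanishes at `a`, exposes `ψ a` in the Bloch seminorm. -/
lemma norm_apply_le (h : IsIsometricMultiplier ψ) (hψ : DifferentiableOn ℂ ψ unitDisk)
    (ha : a ∈ unitDisk) : ‖ψ a‖ ≤ 1 - ‖ψ 0‖ * ‖a‖ := by
  have ha' := mem_unitDisk.1 ha
  rw [← h.blochSemi_mul_mobius ha']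
  refine le_of_eq_of_le ?_ (le_blochSemi (h.isBloch_mul_mobius ha') ha)
  rw [deriv_fun_mul (hψ.differentiableAt_of_mem_unitDisk ha)
      (differentiableAt_mobius (by nlinarith [norm_nonneg a])),
    mobius_self, mul_zero, zero_add, norm_mul, norm_deriv_mobius_self ha']
  field_simp [(one_sub_norm_sq_pos ha).ne']

/-- The test function `mobius (1/2) + mobius (-1/2)` vanishes at `0` but has sup norm `2`. -/
lemma apply_zero (h : IsIsometricMultiplier ψ) (hψ : DifferentiableOn ℂ ψ unitDisk) :
    ψ 0 = 0 := by
  have hp : ‖((1 / 2 : ℝ) : ℂ)‖ = 1 / 2 := by simp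
  have hm : ‖((-1 / 2 : ℝ) : ℂ)‖ = 1 / 2 := by simp
  have hp' : ‖((1 / 2 : ℝ) : ℂ)‖ < 1 := by rw [hp]; norm_num
  have hm' : ‖((-1 / 2 : ℝ) : ℂ)‖ < 1 := by rw [hm]; norm_num
  set f := fun z => mobius ((1 / 2 : ℝ) : ℂ) z + mobius ((-1 / 2 : ℝ) : ℂ) z
  have hfd : DifferentiableOn ℂ f unitDisk :=
    (differentiableOn_mobius hp').add (differentiableOn_mobius hm')
  have hfle : ∀ z ∈ unitDisk, ‖f z‖ ≤ 2 := fun z hz =>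
    (norm_add_le _ _).trans (by linarith [norm_mobius_le_one hp' hz, norm_mobius_le_one hm' hz])
  have hfbdd : BddAbove ((fun z => ‖f z‖) '' unitDisk) := ⟨2, forall_mem_image.2 hfle⟩
  have hsup : supNorm f = 2 := by
    have hf1 : ‖f 1‖ = 2 := by
      simp only [f, mobius_ofReal_one (show (1 / 2 : ℝ) ≠ 1 by norm_num),
        mobius_ofReal_one (show (-1 / 2 : ℝ) ≠ 1 by norm_num)]
      norm_num
    refine le_antisymm (supNorm_le hfle) (hf1 ▸ norm_apply_one_le_supNorm hfbdd ?_)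
    exact (continuousAt_mobius_one hp').add (continuousAt_mobius_one hm')
  have hsemi : blochSemi (fun z => ψ z * f z) = 2 := by
    have hf0 : f 0 = 0 := by simp only [f, mobius_zero]; push_cast; ring
    simpa [blochNorm, hf0, hsup] using h f hfd hfbdd
  have hsplit : (fun z => ψ z * f z) =
      fun z => ψ z * mobius ((1 / 2 : ℝ) : ℂ) z + ψ z * mobius ((-1 / 2 : ℝ) : ℂ) z := by
    funext z; exact mul_add _ _ _
  have hsub := blochSemi_add_le (f := fun z => ψ z * mobius ((1 / 2 : ℝ) : ℂ) z)
    (g := fun z => ψ z * mobius ((-1 / 2 : ℝ) : ℂ) z) (hψ.mul (differentiableOn_mobius hp'))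
    (hψ.mul (differentiableOn_mobius hm')) (h.isBloch_mul_mobius hp') (h.isBloch_mul_mobius hm')
  rw [← hsplit, hsemi, h.blochSemi_mul_mobius hp', h.blochSemi_mul_mobius hm', hp, hm] at hsub
  exact norm_eq_zero.1 (le_antisymm (by linarith) (norm_nonneg _))

end IsIsometricMultiplier

theorem stmt_6 :
    ¬ ∃ ψ : ℂ → ℂ, DifferentiableOn ℂ ψ unitDisk ∧
      ∀ f : ℂ → ℂ, DifferentiableOn ℂ f unitDisk →
        BddAbove ((fun z => ‖f z‖) '' unitDisk) →
        blochNorm (fun z => ψ z * f z) = supNorm f := by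
  rintro ⟨ψ, hψ, h : IsIsometricMultiplier ψ⟩
  have hψ0 : ψ 0 = 0 := h.apply_zero hψ
  have hβ : blochSemi ψ = 1 := by simpa [hψ0] using h.norm_apply_zero_add_blochSemi
  have hle : ∀ z ∈ unitDisk, ‖ψ z‖ ≤ 1 := fun z hz => by simpa [hψ0] using h.norm_apply_le hψ hz
  have hbdd : BddAbove ((fun z => ‖ψ z‖) '' unitDisk) := ⟨1, forall_mem_image.2 hle⟩
  have hsq : blochSemi (fun z => ψ z * ψ z) = supNorm ψ := by
    simpa [blochNorm, hψ0] using h ψ hψ hbdd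
  have hlt : ∀ A, supNorm ψ < A → ∀ z ∈ unitDisk, ‖ψ z‖ < A := fun A hA z hz =>
    (norm_le_supNorm hbdd hz).trans_lt hA
  have hsup : supNorm ψ = 1 := le_antisymm (supNorm_le hle) <| hβ ▸
    le_of_forall_gt_imp_ge_of_dense fun A hA => blochSemi_le_of_norm_lt hψ (hlt A hA)
  have hsq_le := blochSemi_mul_self_le_of_norm_lt hψ (hlt (11 / 10) (by rw [hsup]; norm_num))
  rw [hsq, hsup] at hsq_le
  norm_num at hsq_le
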